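/- Let G be a finite A-regular simple graph on a nonempty vertex set V (A ≥ 1), let λ > 0 be a real number and let r∞ be a real number with 0 < r∞ ≤ 1. If a function σ : V → ℝ satisfies the traffic equilibrium equations σ(x) = λ + ((1 − r∞)/A) · Σ_{y ∈ N(x)} σ(y) for every vertex x (where N(x) is the neighbor set of x), then σ is the constant function σ(x) = λ/r∞ for all x. Conversely, the constant function with value λ/r∞ satisfies these equations. -/

import Mathlib

/-!
Subtracting the constant solution `λ / r∞` turns the equilibrium equations into the homogeneous
system `τ x = ((1 - r∞) / A) · Σ_{y ∈ N(x)} τ y`. On an `A`-regular graph the right-hand side is a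
contraction of factor `1 - r∞ < 1` for the sup norm, so `‖τ‖ ≤ (1 - r∞) ‖τ‖` forces `τ = 0`.
-/

open Finset

namespace SimpleGraph

variable {V : Type*} [Fintype V] (G : SimpleGraph V) [DecidableRel G.Adj]
  {E : Type*} [NormedAddCommGroup E]

theorem norm_sum_neighborFinset_le (f : V → E) (x : V) :
    ‖∑ y ∈ G.neighborFinset x, f y‖ ≤ G.degree x * ‖f‖ :=
  calc ‖∑ y ∈ G.neighborFinset x, f y‖
      ≤ ∑ y ∈ G.neighborFinset x, ‖f y‖ := norm_sum_le _ _
    _ ≤ ∑ _y ∈ G.neighborFinset x, ‖f‖ := sum_le_sum fun y _ => norm_le_pi_norm f y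
    _ = G.degree x * ‖f‖ := by rw [sum_const, card_neighborFinset_eq_degree, nsmul_eq_mul]

theorem eq_zero_of_forall_eq_smul_sum_neighborFinset [NormedSpace ℝ E] {d : ℕ}
    (hdeg : ∀ x, G.degree x ≤ d) {c : ℝ} (hc : |c| * d < 1) {τ : V → E}
    (hτ : ∀ x, τ x = c • ∑ y ∈ G.neighborFinset x, τ y) : τ = 0 := by
  have hcontract : ‖τ‖ ≤ (|c| * d) * ‖τ‖ := by
    refine (pi_norm_le_iff_of_nonneg (by positivity)).2 fun x => ?_
    calc ‖τ x‖ = |c| * ‖∑ y ∈ G.neighborFinset x, τ y‖ := by rw [hτ x, norm_smul, Real.norm_eq_abs]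
      _ ≤ |c| * (G.degree x * ‖τ‖) := by
          gcongr; exact G.norm_sum_neighborFinset_le τ x
      _ ≤ |c| * d * ‖τ‖ := by
          rw [← mul_assoc]; gcongr; exact_mod_cast hdeg x
  exact norm_eq_zero.1 <| le_antisymm (by nlinarith [norm_nonneg τ]) (norm_nonneg τ)

end SimpleGraph

theorem traffic_equilibrium_unique_solution_general
    {V : Type*} [Fintype V] (G : SimpleGraph V) [DecidableRel G.Adj]
    (A : ℕ) (hA : 1 ≤ A) (hreg : G.IsRegularOfDegree A)
    (lam rinf : ℝ) (hr0 : 0 < rinf) (hr1 : rinf ≤ 1)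
    (σ : V → ℝ) :
    (∀ x : V, σ x = lam + ((1 - rinf) / A) * ∑ y ∈ G.neighborFinset x, σ y) ↔
      (∀ x : V, σ x = lam / rinf) := by
  have hA0 : (A : ℝ) ≠ 0 := Nat.cast_ne_zero.2 (Nat.one_le_iff_ne_zero.1 hA)
  have hsum_const (x : V) (a : ℝ) : ∑ _y ∈ G.neighborFinset x, a = A * a := by
    rw [sum_const, G.card_neighborFinset_eq_degree, hreg x, nsmul_eq_mul]
  constructor
  · intro hσ x
    have hcontract : |(1 - rinf) / A| * A < 1 := by
      rw [abs_of_nonneg (by positivity), div_mul_cancel₀ _ hA0]; linarith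
    have hτ := G.eq_zero_of_forall_eq_smul_sum_neighborFinset (fun x => (hreg x).le) hcontract
      (τ := fun x => σ x - lam / rinf) fun x => by
        rw [sum_sub_distrib, hsum_const, smul_eq_mul, hσ x]
        field_simp
        ring
    exact sub_eq_zero.1 (congrFun hτ x)
  · intro hσ x
    rw [sum_congr rfl fun y _ => hσ y, hsum_const, hσ x]
    field_simp
    ring

/-- On a finite A-regular simple graph (A ≥ 1, nonempty vertex set),
with λ > 0 and 0 < r∞ ≤ 1, a function σ satisfies the Mean-Field traffic
equilibrium equations σ(x) = λ + ((1 − r∞)/A) · Σ_{y ∈ N(x)} σ(y) for all x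
if and only if σ is the constant function λ/r∞. -/
theorem traffic_equilibrium_unique_solution
    {V : Type*} [Fintype V] [Nonempty V] (G : SimpleGraph V) [DecidableRel G.Adj]
    (A : ℕ) (hA : 1 ≤ A) (hreg : G.IsRegularOfDegree A)
    (lam rinf : ℝ) (hlam : 0 < lam) (hr0 : 0 < rinf) (hr1 : rinf ≤ 1)
    (σ : V → ℝ) :
    (∀ x : V, σ x = lam + ((1 - rinf) / A) * ∑ y ∈ G.neighborFinset x, σ y) ↔
      (∀ x : V, σ x = lam / rinf) :=
  traffic_equilibrium_unique_solution_general G A hA hreg lam rinf hr0 hr1 σ
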